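/- Let n ≥ 0, let p ≥ 1, and let (b_k)_{k=1}^{2n+1} be a non-increasing sequence with 0 < b ≤ b_k ≤ B < ∞ for all k. Then ∑_{k=1}^{2n+1} (-1)^{k+1} b_k ≤ (∑_{k=1}^{2n+1} (-1)^{k+1} b_k^p)^{1/p} ≤ (1/b + B^{p-1}) · ∑_{k=1}^{2n+1} (-1)^{k+1} b_k. -/

import Mathlib

/-!
Write `S` and `T` for the alternating sums of `b_k` and of `b_k ^ p`. Appending a pair
`- u + v` (with `v ≤ u ≤ S`) to the sequence changes `S` by `v - u`, and by convexity the increment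
of `t ↦ t ^ p` over `[v, u]` is at most its increment over `[S - u + v, S]`; inductively this gives
Szegő's inequality `S ^ p ≤ T`. Grouping the terms of `T` in pairs and bounding each difference
`b_k ^ p - b_{k+1} ^ p` by the mean value theorem gives `T ≤ p B^(p-1) S`, and Bernoulli's
inequality together with `S ≥ b_{2n+1} ≥ bL` turns this into `T ≤ ((1/bL + B^(p-1)) S) ^ p`.
-/

open Finset Real

/-- `c 1 - c 2 + ⋯ + c (2n+1)`. -/
def altSum (c : ℕ → ℝ) (n : ℕ) : ℝ :=
  ∑ k ∈ Finset.Icc 1 (2 * n + 1), (-1 : ℝ) ^ (k + 1) * c k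

lemma altSum_zero (c : ℕ → ℝ) : altSum c 0 = c 1 := by
  simp [altSum]

lemma altSum_succ (c : ℕ → ℝ) (n : ℕ) :
    altSum c (n + 1) = altSum c n - c (2 * n + 2) + c (2 * n + 3) := by
  rw [altSum, altSum, show 2 * (n + 1) + 1 = 2 * n + 1 + 1 + 1 by omega,
    sum_Icc_succ_top (by omega), sum_Icc_succ_top (by omega)]
  simp only [pow_succ, pow_mul]
  ring

lemma altSum_eq_last_add_sum_pairs (c : ℕ → ℝ) (n : ℕ) :
    altSum c n = c (2 * n + 1) + ∑ j ∈ range n, (c (2 * j + 1) - c (2 * j + 2)) := by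
  induction n with
  | zero => simp [altSum_zero]
  | succ n ih =>
    rw [altSum_succ, ih, sum_range_succ, show 2 * (n + 1) + 1 = 2 * n + 3 by omega]
    ring

lemma last_le_altSum {b : ℕ → ℝ} {n : ℕ}
    (hmono : ∀ k, 1 ≤ k → k < 2 * n + 1 → b (k + 1) ≤ b k) : b (2 * n + 1) ≤ altSum b n := by
  rw [altSum_eq_last_add_sum_pairs]
  refine le_add_of_nonneg_right (sum_nonneg fun j hj => ?_)
  have := hmono (2 * j + 1) (by omega) (by simp at hj; omega)
  linarith

lemma altSum_comp_sub_last_le {f : ℝ → ℝ} {b : ℕ → ℝ} {L : ℝ} {n : ℕ}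
    (hpair : ∀ k, 1 ≤ k → k < 2 * n + 1 → f (b k) - f (b (k + 1)) ≤ L * (b k - b (k + 1))) :
    altSum (fun k => f (b k)) n - f (b (2 * n + 1)) ≤ L * (altSum b n - b (2 * n + 1)) := by
  rw [altSum_eq_last_add_sum_pairs, altSum_eq_last_add_sum_pairs, add_sub_cancel_left,
    add_sub_cancel_left, mul_sum]
  exact sum_le_sum fun j hj => hpair (2 * j + 1) (by omega) (by simp at hj; omega)

lemma ConvexOn.map_add_sub_map_le {s : Set ℝ} {f : ℝ → ℝ} (hf : ConvexOn ℝ s f) {x y d : ℝ}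
    (hx : x ∈ s) (hyd : y + d ∈ s) (hxy : x ≤ y) (hd : 0 ≤ d) :
    f (x + d) - f x ≤ f (y + d) - f y := by
  rcases hd.eq_or_lt with rfl | hd
  · simp
  have hxd : x + d ∈ s := hf.1.ordConnected.out hx hyd ⟨by linarith, by linarith⟩
  have hy : y ∈ s := hf.1.ordConnected.out hx hyd ⟨hxy, by linarith⟩
  -- the secant over `[x, y + d]` has slope between those over `[x, x + d]` and `[y, y + d]`
  have h₁ := hf.secant_mono hx hxd hyd (by linarith) (by linarith) (by linarith)
  have h₂ := hf.secant_mono hyd hx hy (by linarith) (by linarith) hxy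
  rw [← neg_div_neg_eq, neg_sub, neg_sub, ← neg_div_neg_eq (f y - _), neg_sub, neg_sub,
    add_sub_cancel_left] at h₂
  rw [add_sub_cancel_left] at h₁
  exact (div_le_div_iff_of_pos_right hd).mp (h₁.trans h₂)

lemma ConvexOn.map_altSum_le_altSum_map {f : ℝ → ℝ} (hf : ConvexOn ℝ (Set.Ici 0) f) {b : ℕ → ℝ}
    {n : ℕ} (hmono : ∀ k, 1 ≤ k → k < 2 * n + 1 → b (k + 1) ≤ b k)
    (hnonneg : ∀ k, 1 ≤ k → k ≤ 2 * n + 1 → 0 ≤ b k) :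
    f (altSum b n) ≤ altSum (fun k => f (b k)) n := by
  induction n with
  | zero => simp [altSum_zero]
  | succ n ih =>
    have hmono' : ∀ k, 1 ≤ k → k < 2 * n + 1 → b (k + 1) ≤ b k :=
      fun k hk hkn => hmono k hk (by omega)
    have ih := ih hmono' fun k hk hkn => hnonneg k hk (by omega)
    have hvu : b (2 * n + 3) ≤ b (2 * n + 2) := hmono (2 * n + 2) (by omega) (by omega)
    have huS : b (2 * n + 2) ≤ altSum b n :=
      (hmono (2 * n + 1) (by omega) (by omega)).trans (last_le_altSum hmono')
    have hv : 0 ≤ b (2 * n + 3) := hnonneg (2 * n + 3) (by omega) (by omega)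
    have hshift : altSum b (n + 1) + (b (2 * n + 2) - b (2 * n + 3)) = altSum b n := by
      rw [altSum_succ]; ring
    have hstep := hf.map_add_sub_map_le (x := b (2 * n + 3)) (y := altSum b (n + 1))
      (d := b (2 * n + 2) - b (2 * n + 3)) hv (by rw [hshift, Set.mem_Ici]; linarith)
      (by rw [altSum_succ]; linarith) (by linarith)
    rw [add_sub_cancel, hshift] at hstep
    rw [altSum_succ (fun k => f (b k))]
    linarith

lemma rpow_sub_rpow_le_mul_sub {p : ℝ} (hp : 1 ≤ p) {c x B : ℝ} (hc : 0 ≤ c) (hcx : c ≤ x)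
    (hxB : x ≤ B) : x ^ p - c ^ p ≤ p * B ^ (p - 1) * (x - c) := by
  rcases hcx.eq_or_lt with rfl | hcx
  · simp
  have hslope := (convexOn_rpow hp).slope_le_of_hasDerivAt hc (hc.trans hcx.le : 0 ≤ x) hcx
    (hasDerivAt_rpow_const (Or.inr hp))
  rw [slope_def_field, div_le_iff₀ (sub_pos.mpr hcx)] at hslope
  have hderiv : x ^ (p - 1) ≤ B ^ (p - 1) :=
    rpow_le_rpow (hc.trans hcx.le) hxB (by linarith)
  have := mul_le_mul_of_nonneg_right (mul_le_mul_of_nonneg_left hderiv (by linarith : 0 ≤ p))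
    (sub_pos.mpr hcx).le
  linarith

lemma altSum_rpow_le {p : ℝ} (hp : 1 ≤ p) {b : ℕ → ℝ} {B : ℝ} {n : ℕ}
    (hmono : ∀ k, 1 ≤ k → k < 2 * n + 1 → b (k + 1) ≤ b k)
    (hbdd : ∀ k, 1 ≤ k → k ≤ 2 * n + 1 → 0 ≤ b k ∧ b k ≤ B) :
    altSum (fun k => b k ^ p) n ≤ p * B ^ (p - 1) * altSum b n := by
  have hpairs := altSum_comp_sub_last_le (f := fun x => x ^ p) (b := b) (n := n)
    (L := p * B ^ (p - 1)) fun k hk hkn =>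
      rpow_sub_rpow_le_mul_sub hp (hbdd (k + 1) (by omega) hkn).1 (hmono k hk hkn)
        (hbdd k hk hkn.le).2
  have hlast := hbdd (2 * n + 1) (by omega) le_rfl
  have hlast_pow := rpow_sub_rpow_le_mul_sub hp le_rfl hlast.1 hlast.2
  rw [zero_rpow (by linarith), sub_zero, sub_zero] at hlast_pow
  linarith

lemma mul_le_rpow_add {p x y : ℝ} (hp : 1 ≤ p) (hx : 1 ≤ x) (hy : 0 ≤ y) :
    p * y ≤ (x + y) ^ p :=
  calc p * y ≤ 1 + p * y := by linarith
    _ ≤ (1 + y) ^ p := one_add_mul_self_le_rpow_one_add (by linarith) hp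
    _ ≤ (x + y) ^ p := rpow_le_rpow (by linarith) (by linarith) (by linarith)

/-- Szegő's theorem for `t ↦ t^p` combined with Theorem 1 with `a_k ≡ 1`:
two-sided bound for the alternating `p`-th power sum of a positive non-increasing
sequence of odd length. -/
theorem alternating_szego_holder (n : ℕ) (p : ℝ) (hp : 1 ≤ p)
    (b : ℕ → ℝ) (bL B : ℝ) (hbL : 0 < bL)
    (hb_mono : ∀ k, 1 ≤ k → k < 2 * n + 1 → b (k + 1) ≤ b k)
    (hb_bdd : ∀ k, 1 ≤ k → k ≤ 2 * n + 1 → bL ≤ b k ∧ b k ≤ B) :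
    (∑ k ∈ Finset.Icc 1 (2 * n + 1), (-1 : ℝ) ^ (k + 1) * b k) ≤
      (∑ k ∈ Finset.Icc 1 (2 * n + 1), (-1 : ℝ) ^ (k + 1) * b k ^ p) ^ (1 / p) ∧
    (∑ k ∈ Finset.Icc 1 (2 * n + 1), (-1 : ℝ) ^ (k + 1) * b k ^ p) ^ (1 / p) ≤
      (1 / bL + B ^ (p - 1)) *
        ∑ k ∈ Finset.Icc 1 (2 * n + 1), (-1 : ℝ) ^ (k + 1) * b k := by
  change altSum b n ≤ altSum (fun k => b k ^ p) n ^ (1 / p) ∧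
    altSum (fun k => b k ^ p) n ^ (1 / p) ≤ (1 / bL + B ^ (p - 1)) * altSum b n
  have hbdd : ∀ k, 1 ≤ k → k ≤ 2 * n + 1 → 0 ≤ b k ∧ b k ≤ B := fun k hk hkn =>
    ⟨hbL.le.trans (hb_bdd k hk hkn).1, (hb_bdd k hk hkn).2⟩
  have hS : bL ≤ altSum b n := (hb_bdd _ (by omega) le_rfl).1.trans (last_le_altSum hb_mono)
  have hS₀ : 0 ≤ altSum b n := hbL.le.trans hS
  have hszego : altSum b n ^ p ≤ altSum (fun k => b k ^ p) n :=
    (convexOn_rpow hp).map_altSum_le_altSum_map hb_mono fun k hk hkn => (hbdd k hk hkn).1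
  have hT : 0 ≤ altSum (fun k => b k ^ p) n := (rpow_nonneg hS₀ p).trans hszego
  obtain ⟨hb₁, hb₁B⟩ := hbdd 1 le_rfl (by omega)
  have hK : 0 ≤ B ^ (p - 1) := rpow_nonneg (hb₁.trans hb₁B) _
  have hp₀ : 0 < p := by linarith
  rw [one_div p]
  refine ⟨(le_rpow_inv_iff_of_pos hS₀ hT hp₀).mpr hszego,
    (rpow_inv_le_iff_of_pos hT (by positivity) hp₀).mpr ?_⟩
  calc altSum (fun k => b k ^ p) n ≤ p * (B ^ (p - 1) * altSum b n) := by
        rw [← mul_assoc]; exact altSum_rpow_le hp hb_mono hbdd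
    _ ≤ (altSum b n / bL + B ^ (p - 1) * altSum b n) ^ p :=
        mul_le_rpow_add hp ((one_le_div hbL).mpr hS) (mul_nonneg hK hS₀)
    _ = ((1 / bL + B ^ (p - 1)) * altSum b n) ^ p := by rw [add_mul, one_div_mul_eq_div]
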